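/- Let f(z) = Σ_{n≥0} c_n z^n be holomorphic on D_R with sup_{|ζ|<R} |f(ζ)| = M < ∞. Then for every q > 0, every integer m ≥ 1, and every z with |z| = r < R, (Σ_{n=m}^∞ |c_n z^n|^q)^{1/q} ≤ (2 r^m) / (R^{m-1} (R^q - r^q)^{1/q}) · (M - |c_0|). -/

import Mathlib

/-!
Carathéodory's inequality: if `g` is holomorphic on the closed disc of radius `ρ` and `Re g ≤ M`
on its boundary, then its Taylor coefficients satisfy `|a n| ρ ^ n ≤ 2 (M - Re g 0)` for `n ≥ 1`.
On the circle, `a n ρ ^ n` is the mean of `(ρ / z) ^ n g z`, while the mean of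
`(ρ / z) ^ n conj (g z)` vanishes, being the conjugate of the mean value of a holomorphic function
vanishing at `0`. Hence `a n ρ ^ n` is a weighted mean of the nonnegative function `2 (M - Re g)`,
whose mean is `2 (M - Re g 0)`. Applied to the unimodular multiple of `f` that takes the value
`|c 0|` at `0`, and letting `ρ → R`, this gives `|c n| R ^ n ≤ 2 (M - |c 0|)`. The tail
`|c n z ^ n|`, `n ≥ m`, is then dominated by a geometric sequence of ratio `r / R`, whose `ℓ^q`
norm is summed explicitly.
-/

open Complex ComplexConjugate Metric Real Filter Topology

theorem norm_circleAverage_le {E : Type*} [NormedAddCommGroup E] [NormedSpace ℝ E] (f : ℂ → E)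
    (c : ℂ) (R : ℝ) : ‖circleAverage f c R‖ ≤ circleAverage (fun z => ‖f z‖) c R := by
  rw [circleAverage_def, circleAverage_def, norm_smul, Real.norm_of_nonneg (by positivity),
    smul_eq_mul]
  gcongr
  exact intervalIntegral.norm_integral_le_integral_norm (by positivity)

theorem DifferentiableOn.circleAverage_eq {E : Type*} [NormedAddCommGroup E] [NormedSpace ℂ E]
    [CompleteSpace E] {f : ℂ → E} {c : ℂ} {R : ℝ} (hf : DifferentiableOn ℂ f (closedBall c R))
    (hR : 0 ≤ R) : circleAverage f c R = f c :=
  DiffContOnCl.circleAverage (hf.diffContOnCl_ball (by rw [abs_of_nonneg hR]))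

section Caratheodory

variable {g : ℂ → ℂ} {ρ : ℝ} {n : ℕ}

theorem circleIntegrable_div_pow_mul (hg : ContinuousOn g (closedBall 0 ρ)) (hρ : 0 < ρ) (n : ℕ) :
    CircleIntegrable (fun z => (ρ / z) ^ n * g z) 0 ρ := by
  refine ContinuousOn.circleIntegrable hρ.le (ContinuousOn.mul ?_
    (hg.mono sphere_subset_closedBall))
  exact (continuousOn_const.div continuousOn_id fun _ hz => ne_of_mem_sphere hz hρ.ne').pow n

/-- On the circle `conj (ρ / z) = z / ρ`, so this is the conjugate of the mean value of
`(z / ρ) ^ n * g z`, which vanishes at the centre. -/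
theorem circleAverage_div_pow_mul_conj_eq_zero (hg : DifferentiableOn ℂ g (closedBall 0 ρ))
    (hρ : 0 < ρ) (hn : n ≠ 0) :
    circleAverage (fun z => (ρ / z) ^ n * conj (g z)) 0 ρ = 0 := by
  have hzg : DifferentiableOn ℂ (fun z => (z / ρ) ^ n * g z) (closedBall 0 ρ) :=
    (by fun_prop : Differentiable ℂ fun z : ℂ => (z / ρ) ^ n).differentiableOn.mul hg
  calc _ = circleAverage ((conjCLE : ℂ →L[ℝ] ℂ) ∘ fun z => (z / ρ) ^ n * g z) 0 ρ := by
        refine circleAverage_congr_sphere fun z hz => ?_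
        rw [abs_of_pos hρ] at hz
        have : conj z / ρ = ρ / z := by
          rw [div_eq_div_iff (by exact_mod_cast hρ.ne') (ne_of_mem_sphere hz hρ.ne'), conj_mul',
            mem_sphere_zero_iff_norm.1 hz]
          ring
        simp [map_div₀, this]
    _ = 0 := by
        rw [ContinuousLinearMap.circleAverage_comp_comm, hzg.circleAverage_eq hρ.le]
        · simp [hn]
        · exact (hzg.continuousOn.mono sphere_subset_closedBall).circleIntegrable hρ.le

theorem circleAverage_div_pow_mul_eq_neg (hg : DifferentiableOn ℂ g (closedBall 0 ρ))
    (hρ : 0 < ρ) (hn : n ≠ 0) (M : ℝ) :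
    circleAverage (fun z => (ρ / z) ^ n * g z) 0 ρ =
      -circleAverage (fun z => (ρ / z) ^ n * ((2 * (M - (g z).re) : ℝ) : ℂ)) 0 ρ := by
  have hMg : DifferentiableOn ℂ (fun z => (M : ℂ) - g z) (closedBall 0 ρ) :=
    (differentiableOn_const _).sub hg
  have hint : ∀ {u : ℂ → ℂ}, ContinuousOn u (closedBall 0 ρ) →
      CircleIntegrable (fun z => (ρ / z) ^ n * u z) 0 ρ := fun hu =>
    circleIntegrable_div_pow_mul hu hρ n
  have hsplit : (fun z => (ρ / z) ^ n * ((2 * (M - (g z).re) : ℝ) : ℂ)) = fun z =>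
      ((ρ / z) ^ n * (M : ℂ) - (ρ / z) ^ n * g z) + (ρ / z) ^ n * conj ((M : ℂ) - g z) := by
    funext z
    have : ((2 * (M - (g z).re) : ℝ) : ℂ) = ((M : ℂ) - g z) + conj ((M : ℂ) - g z) := by
      rw [add_conj]; simp
    rw [this]; ring
  have hconst : circleAverage (fun z => (ρ / z) ^ n * (M : ℂ)) 0 ρ = 0 := by
    simpa using circleAverage_div_pow_mul_conj_eq_zero (g := fun _ => (M : ℂ))
      (differentiableOn_const _) hρ hn
  have hsub : CircleIntegrable (fun z => (ρ / z) ^ n * (M : ℂ) - (ρ / z) ^ n * g z) 0 ρ :=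
    (hint continuousOn_const).sub (hint hg.continuousOn)
  rw [hsplit, circleAverage_fun_add hsub
      (hint (u := fun z => conj ((M : ℂ) - g z))
        (continuous_conj.comp_continuousOn hMg.continuousOn)),
    circleAverage_fun_sub (hint continuousOn_const) (hint hg.continuousOn), hconst,
    circleAverage_div_pow_mul_conj_eq_zero hMg hρ hn]
  ring

theorem norm_circleAverage_div_pow_mul_le {M : ℝ} (hg : DifferentiableOn ℂ g (closedBall 0 ρ))
    (hρ : 0 < ρ) (hgM : ∀ z ∈ sphere 0 ρ, (g z).re ≤ M) (hn : n ≠ 0) :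
    ‖circleAverage (fun z => (ρ / z) ^ n * g z) 0 ρ‖ ≤ 2 * (M - (g 0).re) := by
  have hMg : DifferentiableOn ℂ (fun z => 2 * ((M : ℂ) - g z)) (closedBall 0 ρ) :=
    ((differentiableOn_const _).sub hg).const_mul 2
  calc _ = ‖circleAverage (fun z => (ρ / z) ^ n * ((2 * (M - (g z).re) : ℝ) : ℂ)) 0 ρ‖ := by
        rw [circleAverage_div_pow_mul_eq_neg hg hρ hn M, norm_neg]
    _ ≤ circleAverage (fun z => ‖(ρ / z) ^ n * ((2 * (M - (g z).re) : ℝ) : ℂ)‖) 0 ρ :=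
        norm_circleAverage_le _ _ _
    _ = circleAverage (reCLM ∘ fun z => 2 * ((M : ℂ) - g z)) 0 ρ := by
        refine circleAverage_congr_sphere fun z hz => ?_
        rw [abs_of_pos hρ] at hz
        have hw : ‖(ρ / z : ℂ) ^ n‖ = 1 := by
          rw [norm_pow, norm_div, norm_real, mem_sphere_zero_iff_norm.1 hz,
            Real.norm_of_nonneg hρ.le, div_self hρ.ne', one_pow]
        rw [norm_mul, hw, one_mul, norm_real, Real.norm_of_nonneg (by linarith [hgM z hz])]
        simp
    _ = (circleAverage (fun z => 2 * ((M : ℂ) - g z)) 0 ρ).re := reCLM.circleAverage_comp_comm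
        (ContinuousOn.circleIntegrable hρ.le (hMg.continuousOn.mono sphere_subset_closedBall))
    _ = 2 * (M - (g 0).re) := by
        rw [hMg.circleAverage_eq hρ.le]; simp

end Caratheodory

section TaylorCoefficients

variable {f : ℂ → ℂ} {c : ℕ → ℂ} {R ρ M : ℝ} {n : ℕ}

theorem hasFPowerSeriesOnBall_ofScalars_of_hasSum (hR : 0 < R)
    (hsum : ∀ w ∈ ball (0 : ℂ) R, HasSum (fun n => c n * w ^ n) (f w)) :
    HasFPowerSeriesOnBall f (FormalMultilinearSeries.ofScalars ℂ c) 0 (ENNReal.ofReal R) where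
  r_le := ENNReal.le_of_forall_pos_nnreal_lt fun r _ hr => by
    rw [ENNReal.coe_lt_ofReal] at hr
    refine FormalMultilinearSeries.le_radius_of_tendsto _ (l := 0) ?_
    have hr' : ((r : ℝ) : ℂ) ∈ ball (0 : ℂ) R := by simpa using hr
    simpa using (hsum _ hr').summable.tendsto_atTop_zero.norm
  r_pos := ENNReal.ofReal_pos.2 hR
  hasSum hy := by
    rw [eball_ofReal] at hy
    simpa [FormalMultilinearSeries.ofScalars_apply_eq, mul_comm] using hsum _ hy

theorem circleAverage_div_pow_mul_eq (hf : DifferentiableOn ℂ f (ball 0 R))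
    (hsum : ∀ w ∈ ball (0 : ℂ) R, HasSum (fun n => c n * w ^ n) (f w)) (hρ : 0 < ρ) (hρR : ρ < R)
    (n : ℕ) : circleAverage (fun z => (ρ / z) ^ n * f z) 0 ρ = c n * ρ ^ n := by
  lift ρ to NNReal using hρ.le
  have hcauchy := (hf.mono (closedBall_subset_ball hρR)).hasFPowerSeriesOnBall (mod_cast hρ)
  have hseries := (hasFPowerSeriesOnBall_ofScalars_of_hasSum (hρ.trans hρR) hsum
    ).hasFPowerSeriesAt.eq_formalMultilinearSeries hcauchy.hasFPowerSeriesAt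
  have := congr_arg (fun p : FormalMultilinearSeries ℂ ℂ ℂ => p n fun _ => (ρ : ℂ)) hseries
  simp only [FormalMultilinearSeries.ofScalars_apply_eq, cauchyPowerSeries_apply,
    smul_eq_mul] at this
  rw [this, circleAverage_eq_circleIntegral (mod_cast hρ.ne')]
  simp only [sub_zero, smul_eq_mul]
  congr 2; funext z; ring

theorem norm_coeff_mul_pow_le_of_lt (hf : DifferentiableOn ℂ f (ball 0 R))
    (hsum : ∀ w ∈ ball (0 : ℂ) R, HasSum (fun n => c n * w ^ n) (f w))
    (hfM : ∀ w ∈ ball (0 : ℂ) R, ‖f w‖ ≤ M) (hρ : 0 < ρ) (hρR : ρ < R) (hn : n ≠ 0) :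
    ‖c n‖ * ρ ^ n ≤ 2 * (M - ‖c 0‖) := by
  have hf0 : f 0 = c 0 := (hsum 0 (mem_ball_self (hρ.trans hρR))).unique <| by
    simpa using hasSum_single (f := fun k => c k * (0 : ℂ) ^ k) 0 fun k hk => by simp [hk]
  set u : ℂ := exp (-(arg (c 0)) * I)
  have hu : ‖u‖ = 1 := by simpa [u] using norm_exp_ofReal_mul_I (-arg (c 0))
  have huc : u * c 0 = ‖c 0‖ := by
    conv_lhs => rw [← norm_mul_exp_arg_mul_I (c 0)]
    rw [mul_left_comm, ← Complex.exp_add]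
    simp
  have hgM : ∀ z ∈ sphere (0 : ℂ) ρ, (u * f z).re ≤ M := fun z hz =>
    calc (u * f z).re ≤ ‖u * f z‖ := re_le_norm _
      _ = ‖f z‖ := by rw [norm_mul, hu, one_mul]
      _ ≤ M := hfM z (sphere_subset_closedBall.trans (closedBall_subset_ball hρR) hz)
  have hcar := norm_circleAverage_div_pow_mul_le
    ((hf.mono (closedBall_subset_ball hρR)).const_mul u) hρ hgM hn
  have havg : circleAverage (fun z => (ρ / z) ^ n * (u * f z)) 0 ρ = u * (c n * ρ ^ n) := by
    simp_rw [mul_left_comm _ u]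
    exact (circleAverage_fun_smul (a := u) (f := fun z => (ρ / z) ^ n * f z)).trans
      (by rw [circleAverage_div_pow_mul_eq hf hsum hρ hρR, smul_eq_mul])
  rwa [havg, hf0, huc, norm_mul, hu, one_mul, norm_mul, norm_pow, norm_real,
    Real.norm_of_nonneg hρ.le, ofReal_re] at hcar

theorem norm_coeff_mul_pow_le (hR : 0 < R) (hf : DifferentiableOn ℂ f (ball 0 R))
    (hsum : ∀ w ∈ ball (0 : ℂ) R, HasSum (fun n => c n * w ^ n) (f w))
    (hfM : ∀ w ∈ ball (0 : ℂ) R, ‖f w‖ ≤ M) (hn : n ≠ 0) :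
    ‖c n‖ * R ^ n ≤ 2 * (M - ‖c 0‖) := by
  have hlim : Tendsto (fun ρ : ℝ => ‖c n‖ * ρ ^ n) (𝓝[<] R) (𝓝 (‖c n‖ * R ^ n)) :=
    (by fun_prop : Continuous fun ρ : ℝ => ‖c n‖ * ρ ^ n).continuousWithinAt.tendsto
  refine le_of_tendsto hlim ?_
  filter_upwards [Ioo_mem_nhdsLT hR] with ρ hρ
  exact norm_coeff_mul_pow_le_of_lt hf hsum hfM hρ.1 hρ.2 hn

end TaylorCoefficients

theorem tsum_rpow_rpow_inv_le_of_le_geometric {a : ℕ → ℝ} {C x q : ℝ} (ha0 : ∀ k, 0 ≤ a k)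
    (ha : ∀ k, a k ≤ C * x ^ k) (hx0 : 0 ≤ x) (hx1 : x < 1) (hq : 0 < q) :
    (∑' k, a k ^ q) ^ (1 / q) ≤ C / (1 - x ^ q) ^ (1 / q) := by
  have hC : 0 ≤ C := by simpa using (ha0 0).trans (ha 0)
  have hy0 : 0 ≤ x ^ q := rpow_nonneg hx0 q
  have hy1 : x ^ q < 1 := rpow_lt_one hx0 hx1 hq
  have hterm : ∀ k, a k ^ q ≤ C ^ q * (x ^ q) ^ k := fun k => by
    calc a k ^ q ≤ (C * x ^ k) ^ q := rpow_le_rpow (ha0 k) (ha k) hq.le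
      _ = C ^ q * (x ^ q) ^ k := by rw [mul_rpow hC (by positivity), ← rpow_pow_comm hx0]
  have hgeom : Summable fun k : ℕ => C ^ q * (x ^ q) ^ k :=
    (summable_geometric_of_lt_one hy0 hy1).mul_left _
  have hsum : ∑' k, a k ^ q ≤ C ^ q / (1 - x ^ q) := by
    calc ∑' k, a k ^ q ≤ ∑' k : ℕ, C ^ q * (x ^ q) ^ k :=
          (hgeom.of_nonneg_of_le (fun k => rpow_nonneg (ha0 k) q) hterm).tsum_le_tsum hterm hgeom
      _ = C ^ q / (1 - x ^ q) := by
          rw [tsum_mul_left, tsum_geometric_of_lt_one hy0 hy1, div_eq_mul_inv]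
  calc (∑' k, a k ^ q) ^ (1 / q) ≤ (C ^ q / (1 - x ^ q)) ^ (1 / q) :=
        rpow_le_rpow (tsum_nonneg fun k => rpow_nonneg (ha0 k) q) hsum (by positivity)
    _ = C / (1 - x ^ q) ^ (1 / q) := by
        rw [div_rpow (by positivity) (by linarith), one_div, rpow_rpow_inv hC hq.ne']

theorem div_pow_div_one_sub_rpow_rpow_inv {r R q : ℝ} {m : ℕ} (hr : 0 ≤ r) (hrR : r < R)
    (hq : 0 < q) (hm : 1 ≤ m) :
    (r / R) ^ m / (1 - (r / R) ^ q) ^ (1 / q) =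
      r ^ m / (R ^ (m - 1) * (R ^ q - r ^ q) ^ (1 / q)) := by
  have hR : 0 < R := hr.trans_lt hrR
  have : 1 - (r / R) ^ q = (R ^ q - r ^ q) / R ^ q := by
    rw [div_rpow hr hR.le]; field_simp
  rw [this, div_rpow (sub_nonneg.2 (rpow_le_rpow hr hrR.le hq.le)) (by positivity), one_div,
    rpow_rpow_inv hR.le hq.ne']
  obtain ⟨k, rfl⟩ := Nat.exists_eq_add_of_le' hm
  rw [Nat.add_sub_cancel, div_pow, pow_succ]
  field_simp
  ring

theorem stmt6_general (R r q M : ℝ) (m : ℕ) (f : ℂ → ℂ) (c : ℕ → ℂ)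
    (hq : 0 < q) (hm : 1 ≤ m) (hr : 0 ≤ r) (h3 : r < R)
    (hf : DifferentiableOn ℂ f (ball 0 R))
    (hsum : ∀ w ∈ ball (0:ℂ) R, HasSum (fun n : ℕ => c n * w ^ n) (f w))
    (hM : IsLUB ((fun w => ‖f w‖) '' ball (0:ℂ) R) M)
    (z : ℂ) (hz : ‖z‖ = r) :
    (∑' k : ℕ, ‖c (m + k) * z ^ (m + k)‖ ^ q) ^ (1 / q) ≤
      2 * r ^ m / (R ^ (m - 1) * (R ^ q - r ^ q) ^ (1 / q)) * (M - ‖c 0‖) := by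
  have hR : 0 < R := hr.trans_lt h3
  have hfM : ∀ w ∈ ball (0 : ℂ) R, ‖f w‖ ≤ M := fun w hw => hM.1 ⟨w, hw, rfl⟩
  have hterm :
      ∀ k, ‖c (m + k) * z ^ (m + k)‖ ≤ 2 * (M - ‖c 0‖) * (r / R) ^ m * (r / R) ^ k := by
    intro k
    calc ‖c (m + k) * z ^ (m + k)‖ = ‖c (m + k)‖ * R ^ (m + k) * (r / R) ^ (m + k) := by
          rw [norm_mul, norm_pow, hz, div_pow]; field_simp
      _ ≤ 2 * (M - ‖c 0‖) * (r / R) ^ (m + k) :=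
          mul_le_mul_of_nonneg_right (norm_coeff_mul_pow_le hR hf hsum hfM (by omega))
            (by positivity)
      _ = 2 * (M - ‖c 0‖) * (r / R) ^ m * (r / R) ^ k := by ring
  calc _ ≤ 2 * (M - ‖c 0‖) * (r / R) ^ m / (1 - (r / R) ^ q) ^ (1 / q) :=
        tsum_rpow_rpow_inv_le_of_le_geometric (fun k => norm_nonneg _) hterm (by positivity)
          ((div_lt_one hR).2 h3) hq
    _ = _ := by rw [mul_div_assoc, div_pow_div_one_sub_rpow_rpow_inv hr h3 hq hm]; ring

theorem stmt6 (R r q M : ℝ) (m : ℕ) (f : ℂ → ℂ) (c : ℕ → ℂ)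
    (hR : 0 < R) (hq : 0 < q) (hm : 1 ≤ m) (hr : 0 ≤ r) (h3 : r < R)
    (hf : DifferentiableOn ℂ f (ball 0 R))
    (hsum : ∀ w ∈ ball (0:ℂ) R, HasSum (fun n : ℕ => c n * w ^ n) (f w))
    (hM : IsLUB ((fun w => ‖f w‖) '' ball (0:ℂ) R) M)
    (z : ℂ) (hz : ‖z‖ = r) :
    (∑' k : ℕ, ‖c (m + k) * z ^ (m + k)‖ ^ q) ^ (1 / q) ≤
      2 * r ^ m / (R ^ (m - 1) * (R ^ q - r ^ q) ^ (1 / q)) * (M - ‖c 0‖) :=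
  stmt6_general R r q M m f c hq hm hr h3 hf hsum hM z hz
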